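/- Let n ≥ 2, let m ≤ n with n ≥ 5, n ≠ 4, and let H be a subgroup of S_m × S_n with both projections surjective, such that H acts transitively on {0,...,m-1} × {0,...,n-1}. Let H_1 = {h ∈ H : π_1(h) fixes both i and k} for distinct i, k ∈ {0,...,m-1}. Then π_2(H_1) is either A_n or S_n; in particular π_2(H_1) acts doubly transitively on {0,...,n-1}. -/

import Mathlib

/-!
The subgroup `K = {σ | (1, σ) ∈ H}` (Mathlib's `goursatSnd`) is normal in `S_n`, because `H`
projects onto `S_n`, and it lies in `π₂(H₁)`. If `K ≠ 1` it contains `A_n` (`n ≥ 5`), which has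
index two and is doubly transitive. If `K = 1`, then `H` is the graph of a surjection `S_m → S_n`,
so `m = n` and `H` is the graph of an automorphism `e` of `S_n`. For `n ≠ 6`, `e` maps
transpositions to transpositions: an involution with `j ≥ 2` cycles has a centralizer of order
`2^j j! (n - 2j)! < 2 (n - 2)!`. The images of the transpositions `(a x)` pairwise fail to commute,
so they all move one common point `b`, and `e` maps the stabilizer of `a` into that of `b`. Hence
`H` cannot move `(a, b)` to `(a, b')`, contradicting transitivity.
-/

open Equiv Equiv.Perm Nat

lemma two_pow_mul_factorial_lt_factorial_two_mul_sub_one {j : ℕ} (hj : 2 ≤ j) :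
    2 ^ j * j ! < 2 * (2 * j - 1)! := by
  induction j, hj using Nat.le_induction with
  | base => decide
  | succ j hj ih =>
    rw [show 2 * (j + 1) - 1 = (2 * j - 1) + 1 + 1 by omega, factorial_succ, factorial_succ,
      factorial_succ, pow_succ]
    calc 2 ^ j * 2 * ((j + 1) * j !) = 2 * (j + 1) * (2 ^ j * j !) := by ring
      _ < (2 * j - 1 + 1 + 1) * (2 * j - 1 + 1) * (2 * (2 * j - 1)!) := by
        gcongr <;> omega
      _ = _ := by ring

lemma two_pow_mul_factorial_lt_factorial_two_mul_sub_two {j : ℕ} (hj : 4 ≤ j) :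
    2 ^ j * j ! < 2 * (2 * j - 2)! := by
  induction j, hj using Nat.le_induction with
  | base => decide
  | succ j hj ih =>
    rw [show 2 * (j + 1) - 2 = (2 * j - 2) + 1 + 1 by omega, factorial_succ, factorial_succ,
      factorial_succ, pow_succ]
    calc 2 ^ j * 2 * ((j + 1) * j !) = 2 * (j + 1) * (2 ^ j * j !) := by ring
      _ < (2 * j - 2 + 1 + 1) * (2 * j - 2 + 1) * (2 * (2 * j - 2)!) := by
        gcongr <;> omega
      _ = _ := by ring

lemma two_pow_mul_factorial_mul_factorial_lt_of_lt {n j : ℕ} (hj : 2 ≤ j) (hjn : 2 * j < n) :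
    2 ^ j * j ! * (n - 2 * j)! < 2 * (n - 2)! := by
  induction n, hjn using Nat.le_induction with
  | base =>
    simpa [show 2 * j + 1 - 2 = 2 * j - 1 by omega] using
      two_pow_mul_factorial_lt_factorial_two_mul_sub_one hj
  | succ n hjn ih =>
    rw [show n + 1 - 2 * j = n - 2 * j + 1 by omega, show n + 1 - 2 = n - 2 + 1 by omega,
      factorial_succ, factorial_succ]
    calc 2 ^ j * j ! * ((n - 2 * j + 1) * (n - 2 * j)!)
        = (n - 2 * j + 1) * (2 ^ j * j ! * (n - 2 * j)!) := by ring
      _ < (n - 2 + 1) * (2 * (n - 2)!) := by gcongr <;> omega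
      _ = _ := by ring

lemma two_pow_mul_factorial_mul_factorial_lt {n j : ℕ} (hj : 2 ≤ j) (hjn : 2 * j ≤ n)
    (hn : 5 ≤ n) (hn6 : n ≠ 6) : 2 ^ j * j ! * (n - 2 * j)! < 2 * (n - 2)! := by
  rcases hjn.eq_or_lt with rfl | hjn
  · simpa using two_pow_mul_factorial_lt_factorial_two_mul_sub_two (j := j) (by omega)
  · exact two_pow_mul_factorial_mul_factorial_lt_of_lt hj hjn

namespace Equiv.Perm

lemma exists_apply_ne_and_apply_ne_of_not_commute {α : Type*} {s t : Perm α}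
    (h : ¬Commute s t) : ∃ x, s x ≠ x ∧ t x ≠ x := by
  by_contra! hc
  exact h (Disjoint.commute fun x => or_iff_not_imp_left.mpr (hc x))

variable {α : Type*} [DecidableEq α]

lemma IsSwap.eq_swap_apply {t : Perm α} (ht : t.IsSwap) {a : α} (ha : t a ≠ a) :
    t = swap a (t a) := by
  obtain ⟨u, v, -, rfl⟩ := ht
  rcases (swap_apply_ne_self_iff.mp ha).2 with rfl | rfl
  · rw [swap_apply_left]
  · rw [swap_apply_right, swap_comm]

lemma IsSwap.eq_swap_of_apply_ne {t : Perm α} (ht : t.IsSwap) {a b : α}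
    (ha : t a ≠ a) (hb : t b ≠ b) (hab : a ≠ b) : t = swap a b := by
  rw [ht.eq_swap_apply ha] at hb ⊢
  rcases (swap_apply_ne_self_iff.mp hb).2 with rfl | rfl
  · exact absurd rfl hab
  · rfl

end Equiv.Perm

lemma MulEquiv.nat_card_centralizer_apply {G G' : Type*} [Group G] [Group G'] (e : G ≃* G')
    (g : G) : Nat.card (Subgroup.centralizer {e g}) = Nat.card (Subgroup.centralizer {g}) :=
  Nat.card_congr (e.toEquiv.subtypeEquiv fun x => by
    simp [Subgroup.mem_centralizer_singleton_iff, ← map_mul, e.injective.eq_iff]).symm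

lemma Subgroup.injective_fst_of_goursatSnd_eq_bot {G G' : Type*} [Group G] [Group G']
    {I : Subgroup (G × G')} (h : I.goursatSnd = ⊥) : Function.Injective (Prod.fst ∘ I.subtype) := by
  rintro ⟨x, hx⟩ ⟨y, hy⟩ hxy
  have hxy : x.1 = y.1 := hxy
  have hmem : x.2⁻¹ * y.2 ∈ I.goursatSnd :=
    mem_goursatSnd.mpr (by
      convert I.mul_mem (I.inv_mem hx) hy using 1
      exact Prod.ext (by simp [hxy]) rfl)
  rw [h, Subgroup.mem_bot, inv_mul_eq_one] at hmem
  exact Subtype.ext (Prod.ext hxy hmem)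

section Perm

variable {α β : Type*} [DecidableEq α] [Fintype α] [DecidableEq β] [Fintype β]

lemma nat_card_centralizer_of_isSwap {t : Perm α} (ht : t.IsSwap) :
    Nat.card (Subgroup.centralizer {t}) = 2 * (Fintype.card α - 2)! := by
  rw [Perm.nat_card_centralizer, isSwap_iff_cycleType.mp ht]
  simp [mul_comm]

lemma nat_card_centralizer_of_sq_eq_one {σ : Perm α} (hσ : σ ^ 2 = 1) :
    Nat.card (Subgroup.centralizer {σ}) =
      2 ^ σ.cycleType.card * σ.cycleType.card ! * (Fintype.card α - 2 * σ.cycleType.card)! := by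
  set j := σ.cycleType.card
  have h : σ.cycleType = Multiset.replicate j 2 := cycleType_of_pow_prime_eq_one hσ
  rw [nat_card_centralizer, h]
  rcases eq_or_ne j 0 with hj | hj
  · simp [hj]
  · simp only [Multiset.sum_replicate, Multiset.prod_replicate, Multiset.toFinset_replicate, hj,
      if_false, Finset.prod_singleton, Multiset.count_replicate_self, smul_eq_mul]
    rw [mul_comm j 2]
    ring

lemma isSwap_of_sq_eq_one_of_nat_card_centralizer {σ : Perm α} (h5 : 5 ≤ Fintype.card α)
    (h6 : Fintype.card α ≠ 6) (hσ : σ ^ 2 = 1) (hσ1 : σ ≠ 1)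
    (hcard : Nat.card (Subgroup.centralizer {σ}) = 2 * (Fintype.card α - 2)!) : σ.IsSwap := by
  set j := σ.cycleType.card
  have h : σ.cycleType = Multiset.replicate j 2 := cycleType_of_pow_prime_eq_one hσ
  have hj0 : j ≠ 0 := fun hj => hσ1 (cycleType_eq_zero.mp (by simpa [hj] using h))
  have hjn : 2 * j ≤ Fintype.card α := by
    have := σ.support.card_le_univ
    rwa [← sum_cycleType, h, Multiset.sum_replicate, smul_eq_mul, mul_comm] at this
  rcases (by omega : j = 1 ∨ 2 ≤ j) with hj1 | hj2
  · rw [isSwap_iff_cycleType, h, hj1]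
    rfl
  · have := two_pow_mul_factorial_mul_factorial_lt hj2 hjn h5 h6
    rw [← nat_card_centralizer_of_sq_eq_one hσ, hcard] at this
    exact absurd this (lt_irrefl _)

/- If `(a b), (a c) ∈ S`, a member of `S` fixing `a` must be `(b c)`, and then no fourth member can
meet all of `(a b)`, `(a c)`, `(b c)`. -/
theorem existsUnique_forall_apply_ne_of_pairwise_not_commute
    {S : Finset (Perm α)} (hS : ∀ t ∈ S, t.IsSwap)
    (hpair : (S : Set (Perm α)).Pairwise fun s t => ¬Commute s t) (hcard : 4 ≤ S.card) :
    ∃! z, ∀ t ∈ S, t z ≠ z := by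
  obtain ⟨t₁, ht₁, t₂, ht₂, h₁₂⟩ := Finset.one_lt_card.mp (by omega : 1 < S.card)
  obtain ⟨a, ha₁, ha₂⟩ := exists_apply_ne_and_apply_ne_of_not_commute (hpair ht₁ ht₂ h₁₂)
  have hbc : t₁ a ≠ t₂ a := fun h =>
    h₁₂ (by rw [(hS t₁ ht₁).eq_swap_apply ha₁, (hS t₂ ht₂).eq_swap_apply ha₂, h])
  have fixing : ∀ t ∈ S, t a = a → t = swap (t₁ a) (t₂ a) := by
    intro t ht hta
    have moves : ∀ s ∈ S, s a ≠ a → t (s a) ≠ s a := by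
      intro s hs hsa
      obtain ⟨x, hsx, htx⟩ :=
        exists_apply_ne_and_apply_ne_of_not_commute (hpair hs ht fun h => hsa (h ▸ hta))
      rw [(hS s hs).eq_swap_apply hsa] at hsx
      rcases (swap_apply_ne_self_iff.mp hsx).2 with rfl | rfl
      · exact absurd hta htx
      · exact htx
    exact (hS t ht).eq_swap_of_apply_ne (moves t₁ ht₁ ha₁) (moves t₂ ht₂ ha₂) hbc
  have hall : ∀ t ∈ S, t a ≠ a := by
    by_contra! ⟨t₃, ht₃, hta⟩
    obtain ⟨t₄, ht₄, h₄⟩ :=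
      Finset.exists_mem_notMem_of_card_lt_card (s := {t₁, t₂, t₃}) (t := S)
        ((Finset.card_le_three (a := t₁) (b := t₂) (c := t₃)).trans_lt (by omega))
    simp only [Finset.mem_insert, Finset.mem_singleton, not_or] at h₄
    obtain ⟨h₄₁, h₄₂, h₄₃⟩ := h₄
    by_cases h₄a : t₄ a = a
    · exact h₄₃ ((fixing t₄ ht₄ h₄a).trans (fixing t₃ ht₃ hta).symm)
    obtain ⟨x, h₄x, h₃x⟩ := exists_apply_ne_and_apply_ne_of_not_commute (hpair ht₄ ht₃ h₄₃)
    rw [fixing t₃ ht₃ hta] at h₃x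
    rcases (swap_apply_ne_self_iff.mp h₃x).2 with rfl | rfl
    · exact h₄₁ (((hS t₄ ht₄).eq_swap_of_apply_ne h₄a h₄x (Ne.symm ha₁)).trans
        ((hS t₁ ht₁).eq_swap_apply ha₁).symm)
    · exact h₄₂ (((hS t₄ ht₄).eq_swap_of_apply_ne h₄a h₄x (Ne.symm ha₂)).trans
        ((hS t₂ ht₂).eq_swap_apply ha₂).symm)
  refine ⟨a, hall, fun z hz => ?_⟩
  by_contra hza
  exact h₁₂ (((hS t₁ ht₁).eq_swap_of_apply_ne (hz t₁ ht₁) ha₁ hza).trans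
    ((hS t₂ ht₂).eq_swap_of_apply_ne (hz t₂ ht₂) ha₂ hza).symm)

lemma isSwap_mulEquiv_apply (e : Perm α ≃* Perm β) (h5 : 5 ≤ Fintype.card β)
    (h6 : Fintype.card β ≠ 6) (hcard : Fintype.card α = Fintype.card β) {t : Perm α}
    (ht : t.IsSwap) : (e t).IsSwap := by
  obtain ⟨a, b, hab, rfl⟩ := ht
  refine isSwap_of_sq_eq_one_of_nat_card_centralizer h5 h6
    (by rw [← map_pow, sq, swap_mul_self, map_one]) ?_ ?_
  · simpa [swap_eq_one_iff] using hab
  · rw [e.nat_card_centralizer_apply, nat_card_centralizer_of_isSwap ⟨a, b, hab, rfl⟩, hcard]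

theorem exists_mulEquiv_apply_eq_self (e : Perm α ≃* Perm β) (h5 : 5 ≤ Fintype.card β)
    (h6 : Fintype.card β ≠ 6) (hcard : Fintype.card α = Fintype.card β) (a : α) :
    ∃ b, ∀ g : Perm α, g a = a → e g b = b := by
  set S := (Finset.univ.erase a).image fun x => e (swap a x)
  have hS : ∀ t ∈ S, t.IsSwap := by
    simp only [S, Finset.forall_mem_image]
    exact fun x hx =>
      isSwap_mulEquiv_apply e h5 h6 hcard ⟨a, x, (Finset.ne_of_mem_erase hx).symm, rfl⟩
  have hpair : (S : Set (Perm β)).Pairwise fun s t => ¬Commute s t := by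
    simp only [S, Finset.coe_image]
    rintro _ ⟨x, hx, rfl⟩ _ ⟨y, hy, rfl⟩ hxy hc
    have hxa := Finset.ne_of_mem_erase hx
    have hya := Finset.ne_of_mem_erase hy
    have hxy' : x ≠ y := fun h => hxy (h ▸ rfl)
    exact hxa (by simpa [swap_apply_of_ne_of_ne hya (Ne.symm hxy')] using
      congr($((commute_map_iff e.injective).mp hc) y))
  have hcardS : 4 ≤ S.card := by
    rw [Finset.card_image_of_injective _ fun x y h => by simpa using congr($(e.injective h) a),
      Finset.card_erase_of_mem (Finset.mem_univ a), Finset.card_univ]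
    omega
  -- conjugation by `e g` permutes `S`, so it fixes the unique common moved point of `S`
  obtain ⟨b, hb, huniq⟩ := existsUnique_forall_apply_ne_of_pairwise_not_commute hS hpair hcardS
  refine ⟨b, fun g hg => huniq _ fun t ht => ?_⟩
  obtain ⟨x, hx, rfl⟩ := Finset.mem_image.mp ht
  have hy : g⁻¹ x ∈ Finset.univ.erase a :=
    Finset.mem_erase.mpr ⟨fun h => Finset.ne_of_mem_erase hx (by simpa [hg] using congr(g $h)),
      Finset.mem_univ _⟩
  have hconj : swap a x = g * swap a (g⁻¹ x) * g⁻¹ := by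
    simpa [hg] using swap_apply_apply g a (g⁻¹ x)
  rw [hconj, map_mul, map_mul, map_inv]
  simpa using (e g).injective.ne (hb _ (Finset.mem_image_of_mem _ hy))

lemma eq_alternatingGroup_or_eq_top_of_le {G : Subgroup (Perm α)} (h : alternatingGroup α ≤ G) :
    G = alternatingGroup α ∨ G = ⊤ := by
  have hdvd := Subgroup.index_dvd_of_le h
  rcases subsingleton_or_nontrivial α with hα | hα
  · rw [alternatingGroup.index_eq_one, Nat.dvd_one, Subgroup.index_eq_one] at hdvd
    exact Or.inr hdvd
  · rw [alternatingGroup.index_eq_two] at hdvd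
    rcases (Nat.dvd_prime prime_two).mp hdvd with h1 | h2
    · exact Or.inr (Subgroup.index_eq_one.mp h1)
    · exact Or.inl (eq_alternatingGroup_of_index_eq_two h2)

lemma exists_mem_alternatingGroup_apply_eq (h4 : 4 ≤ Nat.card α) {a b c d : α} (hab : a ≠ b)
    (hcd : c ≠ d) : ∃ g ∈ alternatingGroup α, g a = c ∧ g b = d := by
  have := alternatingGroup.isMultiplyPretransitive α
  have : MulAction.IsMultiplyPretransitive (alternatingGroup α) α 2 :=
    MulAction.isMultiplyPretransitive_of_le (n := Nat.card α - 2) (by omega) (by omega)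
  obtain ⟨g, hga, hgb⟩ := MulAction.is_two_pretransitive_iff.mp this hab hcd
  exact ⟨g, g.2, hga, hgb⟩

theorem goursatSnd_ne_bot_of_transitive {H : Subgroup (Perm α × Perm β)}
    (h5 : 5 ≤ Fintype.card β) (hle : Fintype.card α ≤ Fintype.card β)
    (h6 : ¬(Fintype.card α = 6 ∧ Fintype.card β = 6))
    (h₁ : Function.Surjective (Prod.fst ∘ H.subtype))
    (h₂ : Function.Surjective (Prod.snd ∘ H.subtype))
    (htr : ∀ p q : α × β, ∃ h ∈ H, (h.1 p.1, h.2 p.2) = q) : H.goursatSnd ≠ ⊥ := by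
  intro hbot
  obtain ⟨f, rfl⟩ :=
    Subgroup.exists_eq_graph ⟨Subgroup.injective_fst_of_goursatSnd_eq_bot hbot, h₁⟩
  have hf : Function.Surjective f := fun σ => by
    obtain ⟨⟨x, hx⟩, rfl⟩ := h₂ σ
    exact ⟨x.1, hx⟩
  have hcard : Fintype.card α = Fintype.card β := by
    have := Fintype.card_le_of_surjective f hf
    rw [Fintype.card_perm, Fintype.card_perm] at this
    exact ((Nat.factorial_inj (by omega)).mp (this.antisymm (Nat.factorial_le hle))).symm
  let e := MulEquiv.ofBijective f ((Fintype.bijective_iff_surjective_and_card f).mpr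
    ⟨hf, by rw [Fintype.card_perm, Fintype.card_perm, hcard]⟩)
  have : Nonempty α := Fintype.card_pos_iff.mp (by omega)
  have : Nontrivial β := Fintype.one_lt_card_iff_nontrivial.mp (by omega)
  obtain ⟨a⟩ := ‹Nonempty α›
  obtain ⟨b, hb⟩ := exists_mulEquiv_apply_eq_self e h5 (fun h => h6 ⟨hcard.trans h, h⟩) hcard a
  obtain ⟨b', hb'⟩ := exists_ne b
  obtain ⟨h, hh, hq⟩ := htr (a, b) (a, b')
  rw [Prod.mk.injEq] at hq
  exact hb' (hq.2.symm.trans ((hh : f h.1 = h.2) ▸ hb h.1 hq.1))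

end Perm

theorem stmt9_general (m n : ℕ) (hmn : m ≤ n) (hn : 5 ≤ n)
    (hmn6 : ¬ (m = 6 ∧ n = 6))
    (H : Subgroup (Equiv.Perm (Fin m) × Equiv.Perm (Fin n)))
    (h1 : Subgroup.map (MonoidHom.fst (Equiv.Perm (Fin m)) (Equiv.Perm (Fin n))) H = ⊤)
    (h2 : Subgroup.map (MonoidHom.snd (Equiv.Perm (Fin m)) (Equiv.Perm (Fin n))) H = ⊤)
    (htr : ∀ p q : Fin m × Fin n, ∃ h ∈ H, (h.1 p.1, h.2 p.2) = q)
    (i k : Fin m)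
    (H1 : Subgroup (Equiv.Perm (Fin m) × Equiv.Perm (Fin n)))
    (hH1 : ∀ h, h ∈ H1 ↔ h ∈ H ∧ h.1 i = i ∧ h.1 k = k) :
    (Subgroup.map (MonoidHom.snd (Equiv.Perm (Fin m)) (Equiv.Perm (Fin n))) H1
        = alternatingGroup (Fin n) ∨
      Subgroup.map (MonoidHom.snd (Equiv.Perm (Fin m)) (Equiv.Perm (Fin n))) H1 = ⊤) ∧
    (∀ a b c d : Fin n, a ≠ b → c ≠ d →
      ∃ x ∈ Subgroup.map (MonoidHom.snd (Equiv.Perm (Fin m)) (Equiv.Perm (Fin n))) H1,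
        x a = c ∧ x b = d) := by
  have h₁ : Function.Surjective (Prod.fst ∘ H.subtype) := fun g => by
    obtain ⟨x, hx, rfl⟩ := h1.ge (Subgroup.mem_top g)
    exact ⟨⟨x, hx⟩, rfl⟩
  have h₂ : Function.Surjective (Prod.snd ∘ H.subtype) := fun g => by
    obtain ⟨x, hx, rfl⟩ := h2.ge (Subgroup.mem_top g)
    exact ⟨⟨x, hx⟩, rfl⟩
  have : H.goursatSnd.Normal := Subgroup.normal_goursatSnd h₂
  have hK : H.goursatSnd ≠ ⊥ :=
    goursatSnd_ne_bot_of_transitive (by simpa) (by simpa) (by simpa using hmn6) h₁ h₂ htr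
  have hKH1 : H.goursatSnd ≤ H1.map (MonoidHom.snd _ _) := fun σ hσ =>
    ⟨(1, σ), (hH1 _).mpr ⟨Subgroup.mem_goursatSnd.mp hσ, rfl, rfl⟩, rfl⟩
  have hA : alternatingGroup (Fin n) ≤ H1.map (MonoidHom.snd _ _) :=
    (Perm.alternatingGroup_le_of_normal (by simpa)
      ((Subgroup.nontrivial_iff_ne_bot _).mpr hK)).trans hKH1
  refine ⟨eq_alternatingGroup_or_eq_top_of_le hA, fun a b c d hab hcd => ?_⟩
  obtain ⟨x, hx, hxa, hxb⟩ :=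
    exists_mem_alternatingGroup_apply_eq (by simpa using hn.trans' (by norm_num)) hab hcd
  exact ⟨x, hA hx, hxa, hxb⟩

/-- Let `2 ≤ m ≤ n`, `n ≥ 5`, `(m,n) ≠ (6,6)`, and let `H ≤ S_m × S_n` have both projections
surjective and act transitively on the product. For distinct `i, k` let
`H₁ = {h ∈ H : π₁(h)` fixes `i` and `k}`. Then `π₂(H₁)` is `A_n` or `S_n`; in particular it
acts doubly transitively on `{0,…,n-1}`. -/
theorem stmt9 (m n : ℕ) (hm : 2 ≤ m) (hmn : m ≤ n) (hn : 5 ≤ n)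
    (hmn6 : ¬ (m = 6 ∧ n = 6))
    (H : Subgroup (Equiv.Perm (Fin m) × Equiv.Perm (Fin n)))
    (h1 : Subgroup.map (MonoidHom.fst (Equiv.Perm (Fin m)) (Equiv.Perm (Fin n))) H = ⊤)
    (h2 : Subgroup.map (MonoidHom.snd (Equiv.Perm (Fin m)) (Equiv.Perm (Fin n))) H = ⊤)
    (htr : ∀ p q : Fin m × Fin n, ∃ h ∈ H, (h.1 p.1, h.2 p.2) = q)
    (i k : Fin m) (hik : i ≠ k)
    (H1 : Subgroup (Equiv.Perm (Fin m) × Equiv.Perm (Fin n)))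
    (hH1 : ∀ h, h ∈ H1 ↔ h ∈ H ∧ h.1 i = i ∧ h.1 k = k) :
    (Subgroup.map (MonoidHom.snd (Equiv.Perm (Fin m)) (Equiv.Perm (Fin n))) H1
        = alternatingGroup (Fin n) ∨
      Subgroup.map (MonoidHom.snd (Equiv.Perm (Fin m)) (Equiv.Perm (Fin n))) H1 = ⊤) ∧
    (∀ a b c d : Fin n, a ≠ b → c ≠ d →
      ∃ x ∈ Subgroup.map (MonoidHom.snd (Equiv.Perm (Fin m)) (Equiv.Perm (Fin n))) H1,
        x a = c ∧ x b = d) :=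
  stmt9_general m n hmn hn hmn6 H h1 h2 htr i k H1 hH1
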